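/- Let T be a tree (a finite simple connected acyclic graph) on n vertices, bipartite with parts of sizes n_1 and n_2, n = n_1 + n_2. If n_1 ≤ n/4, then T is hypoenergetic: E(T) < n. -/

import Mathlib

open Matrix Finset

/-- The energy of the vertex `i` of a finite simple graph `G`:
the `(i,i)` entry of `|A| = (A Aᴴ)^{1/2}`, where `A` is the adjacency matrix. -/
noncomputable def vertexEnergy {n : ℕ} (G : SimpleGraph (Fin n)) [DecidableRel G.Adj]
    (i : Fin n) : ℝ :=
  ((Matrix.posSemidef_self_mul_conjTranspose (G.adjMatrix ℝ)).1.eigenvectorUnitary.1 *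
      diagonal (((↑) : ℝ → ℝ) ∘ (fun x => Real.sqrt x) ∘
        (Matrix.posSemidef_self_mul_conjTranspose (G.adjMatrix ℝ)).1.eigenvalues) *
      (star (Matrix.posSemidef_self_mul_conjTranspose (G.adjMatrix ℝ)).1.eigenvectorUnitary :
        Matrix (Fin n) (Fin n) ℝ)) i i

/-- The energy of a finite simple graph: the sum of the energies of its vertices. -/
noncomputable def graphEnergy {n : ℕ} (G : SimpleGraph (Fin n)) [DecidableRel G.Adj] : ℝ :=
  ∑ i, vertexEnergy G i

/-!
Write `A` for the adjacency matrix and `m = n - 1` for the number of edges. The energy is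
`∑ √μᵢ` over the eigenvalues `μᵢ` of `A Aᵀ`, of which only `rank A` are nonzero and whose sum
is `tr (A Aᵀ) = 2m`; Cauchy–Schwarz gives `E(T)² ≤ rank A · 2m`. The part `V₁` is a vertex
cover, so `A` splits into the rows indexed by `V₁` and a matrix whose columns are supported
in `V₁`, whence `rank A ≤ 2 n₁ ≤ n / 2` and `E(T)² ≤ n (n - 1) < n²`.
-/

namespace Matrix

section Rank

variable {m n K : Type*} [Fintype n] [Field K]

theorem rank_add_le (A B : Matrix m n K) : (A + B).rank ≤ A.rank + B.rank := by
  rw [rank, rank, rank, mulVecLin_add]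
  exact (Submodule.finrank_mono (LinearMap.range_add_le _ _)).trans
    (Submodule.finrank_add_le_finrank_add_finrank _ _)

theorem rank_le_two_mul_card_of_cover (A : Matrix n n K) (C : Finset n)
    (hC : ∀ i j, A i j ≠ 0 → i ∈ C ∨ j ∈ C) : A.rank ≤ 2 * #C := by
  classical
  set R : Matrix n n K := of fun i j => if i ∈ C then A i j else 0
  have hR : R.rank ≤ #C :=
    rank_le_card_of_support_subset R C <|
      Function.support_subset_iff'.2 fun i (hi : i ∉ C) => by ext j; simp [R, hi]
  have hAR : (A - R).rank ≤ #C := by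
    rw [← rank_transpose]
    refine rank_le_card_of_support_subset _ C <|
      Function.support_subset_iff'.2 fun j (hj : j ∉ C) => ?_
    ext i
    by_cases hi : i ∈ C
    · simp [R, hi]
    · have hAij : A i j = 0 := not_not.1 fun h => (hC i j h).elim hi hj
      simp [R, hi, hAij]
  calc A.rank = (R + (A - R)).rank := by rw [add_sub_cancel]
    _ ≤ R.rank + (A - R).rank := rank_add_le _ _
    _ ≤ 2 * #C := by omega

end Rank

section Spectrum

variable {n 𝕜 : Type*} [Fintype n] [DecidableEq n] [RCLike 𝕜]

theorem trace_unitary_mul_mul_star (U : unitaryGroup n 𝕜) (D : Matrix n n 𝕜) :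
    trace ((U : Matrix n n 𝕜) * D * ((star U : unitaryGroup n 𝕜) : Matrix n n 𝕜)) = trace D := by
  rw [trace_mul_cycle, ← MulMemClass.coe_mul, Unitary.star_mul_self, OneMemClass.coe_one, one_mul]

theorem PosSemidef.sq_sum_sqrt_eigenvalues_le_rank_mul_trace {S : Matrix n n ℝ}
    (hS : S.PosSemidef) : (∑ i, √(hS.1.eigenvalues i)) ^ 2 ≤ S.rank * S.trace := by
  set μ := hS.1.eigenvalues
  set K := univ.filter fun i => μ i ≠ 0
  have hK : #K = S.rank := by rw [hS.1.rank_eq_card_non_zero_eigs, Fintype.card_subtype]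
  calc (∑ i, √(μ i)) ^ 2 = (∑ i ∈ K, √(μ i)) ^ 2 := by
        rw [sum_filter_of_ne (p := fun i => μ i ≠ 0) fun i _ h hμ =>
          h (by rw [hμ, Real.sqrt_zero])]
    _ ≤ #K * ∑ i ∈ K, √(μ i) ^ 2 := sq_sum_le_card_mul_sum_sq
    _ = #K * ∑ i ∈ K, μ i := by
        rw [sum_congr rfl fun i _ => Real.sq_sqrt (hS.eigenvalues_nonneg i)]
    _ ≤ #K * ∑ i, μ i := by
        gcongr
        exacts [fun i _ _ => hS.eigenvalues_nonneg i, subset_univ K]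
    _ = S.rank * S.trace := by rw [hK, hS.1.trace_eq_sum_eigenvalues]; rfl

end Spectrum

end Matrix

namespace SimpleGraph

variable {V : Type*} [Fintype V] (G : SimpleGraph V) [DecidableRel G.Adj]

theorem trace_adjMatrix_mul_conjTranspose [DecidableEq V] :
    (G.adjMatrix ℝ * (G.adjMatrix ℝ)ᴴ).trace = 2 * #G.edgeFinset := by
  rw [conjTranspose_eq_transpose_of_trivial, transpose_adjMatrix, trace]
  simp_rw [diag_apply, adjMatrix_mul_self_apply_self]
  exact_mod_cast G.sum_degrees_eq_twice_card_edges

theorem rank_adjMatrix_le_two_mul_card {K : Type*} [Field K] {C : Finset V}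
    (hC : G.IsVertexCover C) : (G.adjMatrix K).rank ≤ 2 * #C :=
  rank_le_two_mul_card_of_cover _ C fun i j h => hC (by simpa [adjMatrix_apply] using h)

end SimpleGraph

theorem graphEnergy_eq_sum_sqrt_eigenvalues {n : ℕ} (G : SimpleGraph (Fin n))
    [DecidableRel G.Adj] : graphEnergy G =
      ∑ i, √((posSemidef_self_mul_conjTranspose (G.adjMatrix ℝ)).1.eigenvalues i) :=
  (Matrix.trace_unitary_mul_mul_star _ _).trans (trace_diagonal _)

theorem sq_graphEnergy_le_rank_mul_two_mul_card_edgeFinset {n : ℕ} (G : SimpleGraph (Fin n))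
    [DecidableRel G.Adj] : graphEnergy G ^ 2 ≤ (G.adjMatrix ℝ).rank * (2 * #G.edgeFinset) := by
  have h :=
    (posSemidef_self_mul_conjTranspose (G.adjMatrix ℝ)).sq_sum_sqrt_eigenvalues_le_rank_mul_trace
  rwa [rank_self_mul_conjTranspose, G.trace_adjMatrix_mul_conjTranspose,
    ← graphEnergy_eq_sum_sqrt_eigenvalues] at h

theorem stmt_17_general {n : ℕ} (T : SimpleGraph (Fin n)) [DecidableRel T.Adj]
    (htree : T.IsTree)
    (V₁ V₂ : Finset (Fin n))
    (hbip : ∀ u v : Fin n, T.Adj u v → (u ∈ V₁ ∧ v ∈ V₂) ∨ (u ∈ V₂ ∧ v ∈ V₁))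
    (n₁ : ℕ) (hn₁ : n₁ = V₁.card)
    (hsmall : (n₁ : ℝ) ≤ (n : ℝ) / 4) :
    graphEnergy T < n := by
  have hcover : T.IsVertexCover V₁ := fun u v h => by
    rcases hbip u v h with h | h
    exacts [.inl h.1, .inr h.2]
  have hrank : ((T.adjMatrix ℝ).rank : ℝ) ≤ 2 * n₁ := by
    exact_mod_cast hn₁ ▸ T.rank_adjMatrix_le_two_mul_card hcover
  have hedges : (#T.edgeFinset : ℝ) + 1 = n := by
    exact_mod_cast (by simpa using htree.card_edgeFinset)
  have hsq : graphEnergy T ^ 2 < (n : ℝ) ^ 2 :=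
    calc graphEnergy T ^ 2 ≤ (T.adjMatrix ℝ).rank * (2 * #T.edgeFinset) :=
          sq_graphEnergy_le_rank_mul_two_mul_card_edgeFinset T
      _ ≤ 2 * n₁ * (2 * #T.edgeFinset) := by gcongr
      _ < (n : ℝ) ^ 2 := by nlinarith [(#T.edgeFinset).cast_nonneg (α := ℝ)]
  exact lt_of_pow_lt_pow_left₀ 2 n.cast_nonneg hsq

theorem stmt_17 {n : ℕ} (T : SimpleGraph (Fin n)) [DecidableRel T.Adj]
    (htree : T.IsTree)
    (V₁ V₂ : Finset (Fin n)) (hdisj : Disjoint V₁ V₂) (hcover : V₁ ∪ V₂ = Finset.univ)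
    (hbip : ∀ u v : Fin n, T.Adj u v → (u ∈ V₁ ∧ v ∈ V₂) ∨ (u ∈ V₂ ∧ v ∈ V₁))
    (n₁ n₂ : ℕ) (hn₁ : n₁ = V₁.card) (hn₂ : n₂ = V₂.card) (hn : n = n₁ + n₂)
    (hsmall : (n₁ : ℝ) ≤ (n : ℝ) / 4) :
    graphEnergy T < n :=
  stmt_17_general T htree V₁ V₂ hbip n₁ hn₁ hsmall
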